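/- Let G = (V,E) be a k-sparse locally finite graph and q : V → [0,∞). Set d := inf_{x∈V}(deg(x)+q(x)) and D := sup_{x∈V}(deg(x)+q(x)), and assume k ≤ d ≤ D < ∞. Then for every finitely supported f : V → ℂ, (d − 2·√((k/2)(d − k/2)))·‖f‖² ≤ Q_Δ(f) + Q_q(f) ≤ (D + 2·√((k/2)(D − k/2)))·‖f‖²; in particular these numbers bound the bottom and the top of the spectrum of Δ+q. -/

import Mathlib

/-!
Expanding `‖f x - f y‖² = ‖f x‖² + ‖f y‖² - 2 Re (f x * conj (f y))` gives
`Q_Δ(f) = Q_deg(f) - ∑_{x ~ y} Re (f x * conj (f y))`, so everything hinges on the cross term.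
For `0 < ε ≤ 1` one has `ab ≤ (ε/2)(a² + b²) + (1/(2ε) - ε/2) min(a², b²)`, and sparseness gives
`∑_{x ~ y} min(g x, g y) ≤ k ∑ g` for every `g ≥ 0` (layer cake: every level set `W` of `g` carries
at most `k|W|` ordered edges). With `g = |f|²` this yields
`|Q_Δ(f) - Q_deg(f)| ≤ ε Q_deg(f) + (1/(2ε) - ε/2) k ‖f‖²`. Adding `Q_q(f)`, using `d ≤ deg + q ≤ D`
and choosing `ε = √(k/2) / √(d - k/2)` (at most `1` because `k ≤ d`; likewise with `D`) gives both
bounds; the case `k = 0` is the limit `ε → 0`.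
-/

open scoped BigOperators

noncomputable section

variable {V : Type*} [DecidableEq V] (G : SimpleGraph V) [DecidableRel G.Adj]

/-- The squared `ℓ²`-norm `‖f‖² = ∑_x |f x|²` of a (finitely supported) function. -/
def qNormSq (f : V → ℂ) : ℝ := ∑' x, ‖f x‖ ^ 2

/-- The quadratic form of the Laplacian:
`Q_Δ(f) = (1/2) ∑_{x ~ y} |f x - f y|²` (sum over ordered pairs of adjacent vertices). -/
def qLap (f : V → ℂ) : ℝ :=
  (1 / 2) * ∑' (x : V), ∑' (y : V), if G.Adj x y then ‖f x - f y‖ ^ 2 else 0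

/-- The magnetic quadratic form
`Q_θ(f) = (1/2) ∑_{x ~ y} |f x - e^{iθ(x,y)} f y|²`. -/
def qMag (θ : V → V → ℝ) (f : V → ℂ) : ℝ :=
  (1 / 2) * ∑' (x : V), ∑' (y : V),
    if G.Adj x y then ‖f x - Complex.exp (Complex.I * (θ x y)) * f y‖ ^ 2 else 0

/-- The quadratic form of a potential: `Q_q(f) = ∑_x q x * |f x|²`. -/
def qPot (q : V → ℝ) (f : V → ℂ) : ℝ := ∑' x, q x * ‖f x‖ ^ 2

variable [G.LocallyFinite]

/-- The quadratic form of the degree: `Q_deg(f) = ∑_x deg x * |f x|²`. -/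
def qDeg (f : V → ℂ) : ℝ := ∑' x, (G.degree x : ℝ) * ‖f x‖ ^ 2

/-- Twice the number of undirected edges of the subgraph induced on `W`,
i.e. the number of ordered pairs of adjacent vertices in `W × W`. -/
def edgesTwice (W : Finset V) : ℕ := ((W ×ˢ W).filter fun p => G.Adj p.1 p.2).card

/-- The cardinality `|∂W|` of the edge boundary of `W`. -/
def bdryCard (W : Finset V) : ℕ :=
  ∑ x ∈ W, ((G.neighborFinset x).filter fun y => y ∉ W).card

/-- `(G, q)` is `(a,k)`-sparse: `2|E_W| ≤ k|W| + a(|∂W| + q₊(W))` for all finite `W`. -/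
def IsSparse (q : V → ℝ) (a k : ℝ) : Prop :=
  ∀ W : Finset V,
    (edgesTwice G W : ℝ) ≤ k * W.card + a * ((bdryCard G W : ℝ) + ∑ x ∈ W, max (q x) 0)

/-- The potential `q` belongs to the class `K_α`:
`Q_{q₋}(f) ≤ α (Q_Δ(f) + Q_{q₊}(f)) + C ‖f‖²` for all finitely supported `f`. -/
def KClass (q : V → ℝ) (α : ℝ) : Prop :=
  ∃ C : ℝ, 0 ≤ C ∧ ∀ f : V → ℂ, (Function.support f).Finite →
    qPot (fun x => max (-q x) 0) f ≤
      α * (qLap G f + qPot (fun x => max (q x) 0) f) + C * qNormSq f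

/-- The potential `q` belongs to the magnetic class `K_α^θ`:
`Q_{q₋}(f) ≤ α (Q_θ(f) + Q_{q₊}(f)) + C ‖f‖²` for all finitely supported `f`. -/
def KClassTheta (θ : V → V → ℝ) (q : V → ℝ) (α : ℝ) : Prop :=
  ∃ C : ℝ, 0 ≤ C ∧ ∀ f : V → ℂ, (Function.support f).Finite →
    qPot (fun x => max (-q x) 0) f ≤
      α * (qMag G θ f + qPot (fun x => max (q x) 0) f) + C * qNormSq f

/-- The Cheeger (isoperimetric) constant of `U ⊆ V`:
the infimum over nonempty finite `W ⊆ U` of `(|∂W| + q(W)) / (deg(W) + q(W))`,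
with the convention that the quotient is `0` when the denominator vanishes. -/
def cheeger (q : V → ℝ) (U : Set V) : ℝ :=
  ⨅ W : {W : Finset V // ↑W ⊆ U ∧ W.Nonempty},
    if (∑ x ∈ W.1, ((G.degree x : ℝ) + q x)) = 0 then 0
    else ((bdryCard G W.1 : ℝ) + ∑ x ∈ W.1, q x) / ∑ x ∈ W.1, ((G.degree x : ℝ) + q x)

/-- The Cheeger constant at infinity: `α_∞ = sup over finite K of α_{V∖K}`. -/
def cheegerInfty (q : V → ℝ) : ℝ :=
  ⨆ K : Finset V, cheeger G q ((↑K : Set V)ᶜ)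

def adjPairs (W : Finset V) : Finset (V × V) := (W ×ˢ W).filter fun p => G.Adj p.1 p.2

section Pairs

omit [DecidableEq V] [G.LocallyFinite]

theorem card_adjPairs (W : Finset V) : (adjPairs G W).card = edgesTwice G W := rfl

theorem adjPairs_mono {W W' : Finset V} (h : W ⊆ W') : adjPairs G W ⊆ adjPairs G W' :=
  Finset.filter_subset_filter _ (Finset.product_subset_product h h)

theorem sum_adjPairs_eq_sum_sum {M : Type*} [AddCommMonoid M] (W : Finset V) (F : V → V → M) :
    ∑ p ∈ adjPairs G W, F p.1 p.2 = ∑ x ∈ W, ∑ y ∈ W, if G.Adj x y then F x y else 0 := by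
  rw [adjPairs, Finset.sum_filter, Finset.sum_product]

theorem sum_adjPairs_swap {M : Type*} [AddCommMonoid M] (W : Finset V) (F : V → V → M) :
    ∑ p ∈ adjPairs G W, F p.2 p.1 = ∑ p ∈ adjPairs G W, F p.1 p.2 := by
  rw [sum_adjPairs_eq_sum_sum G W (fun x y => F y x), sum_adjPairs_eq_sum_sum, Finset.sum_comm]
  simp only [G.adj_comm]

theorem nonneg_of_forall_edgesTwice_le [Nonempty V] {k : ℝ}
    (hsparse : ∀ W : Finset V, (edgesTwice G W : ℝ) ≤ k * W.card) : 0 ≤ k := by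
  simpa [edgesTwice, Finset.filter_singleton] using hsparse {Classical.arbitrary V}

end Pairs

omit [G.LocallyFinite] in
/-- Subtracting the minimum `m` of `g` on `W` splits off `m * edgesTwice G W` and leaves a function
vanishing at a vertex of `W`, which can then be removed. -/
theorem sum_adjPairs_min_le {k : ℝ} (hsparse : ∀ W : Finset V, (edgesTwice G W : ℝ) ≤ k * W.card)
    (W : Finset V) {g : V → ℝ} (hg : ∀ x ∈ W, 0 ≤ g x) :
    ∑ p ∈ adjPairs G W, min (g p.1) (g p.2) ≤ k * ∑ x ∈ W, g x := by
  induction W using Finset.strongInduction generalizing g with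
  | H W ih =>
  rcases W.eq_empty_or_nonempty with rfl | hW
  · simp [adjPairs]
  obtain ⟨x₀, hx₀, hmin⟩ := W.exists_min_image g hW
  set m := g x₀
  have hrest := ih (W.erase x₀) (Finset.erase_ssubset hx₀) (g := fun x => g x - m)
    fun x hx => sub_nonneg.2 (hmin x (Finset.mem_of_mem_erase hx))
  have hpairs : ∑ p ∈ adjPairs G (W.erase x₀), min (g p.1 - m) (g p.2 - m)
      = ∑ p ∈ adjPairs G W, min (g p.1 - m) (g p.2 - m) := by
    refine Finset.sum_subset (adjPairs_mono G (Finset.erase_subset x₀ W)) fun p hp hp' => ?_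
    simp only [adjPairs, Finset.mem_filter, Finset.mem_product, Finset.mem_erase] at hp hp'
    have h₁ := sub_nonneg.2 (hmin p.1 hp.1.1)
    have h₂ := sub_nonneg.2 (hmin p.2 hp.1.2)
    by_cases h : p.1 = x₀
    · rw [h, sub_self]; exact min_eq_left h₂
    · have : p.2 = x₀ := by tauto
      rw [this, sub_self]; exact min_eq_right h₁
  have hvals : ∑ x ∈ W.erase x₀, (g x - m) = ∑ x ∈ W, g x - m * W.card := by
    rw [Finset.sum_erase W (sub_self m), Finset.sum_sub_distrib, Finset.sum_const, nsmul_eq_mul,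
      mul_comm]
  calc ∑ p ∈ adjPairs G W, min (g p.1) (g p.2)
      = m * edgesTwice G W + ∑ p ∈ adjPairs G W, min (g p.1 - m) (g p.2 - m) := by
        have hsplit (a b : ℝ) : min a b = m + min (a - m) (b - m) := by
          rw [min_sub_sub_right]; ring
        rw [Finset.sum_congr rfl fun p _ => hsplit (g p.1) (g p.2), Finset.sum_add_distrib,
          Finset.sum_const, card_adjPairs, nsmul_eq_mul, mul_comm]
    _ ≤ m * (k * W.card) + k * (∑ x ∈ W, g x - m * W.card) := by
        rw [← hpairs, ← hvals]
        exact add_le_add (mul_le_mul_of_nonneg_left (hsparse W) (hg x₀ hx₀)) hrest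
    _ = k * ∑ x ∈ W, g x := by ring

theorem tsum_tsum_eq_sum_sum {α M : Type*} [AddCommMonoid M] [TopologicalSpace M]
    {F : α → α → M} {U : Finset α} (hF : ∀ x y, (x ∉ U ∨ y ∉ U) → F x y = 0) :
    ∑' x, ∑' y, F x y = ∑ x ∈ U, ∑ y ∈ U, F x y := by
  rw [tsum_eq_sum fun x hx => (tsum_congr fun y => hF x y (Or.inl hx)).trans tsum_zero]
  exact Finset.sum_congr rfl fun x _ => tsum_eq_sum fun y hy => hF x y (Or.inr hy)

theorem mul_le_eps_mul_add_min {a b ε : ℝ} (ha : 0 ≤ a) (hb : 0 ≤ b) (hε : 0 < ε) :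
    a * b ≤ ε / 2 * (a ^ 2 + b ^ 2) + (1 / (2 * ε) - ε / 2) * min (a ^ 2) (b ^ 2) := by
  wlog hab : a ≤ b generalizing a b
  · simpa only [mul_comm, add_comm, min_comm] using this hb ha (le_of_not_ge hab)
  rw [min_eq_left (pow_le_pow_left₀ ha hab 2)]
  have hamgm : 2 * ε * (a * b) ≤ ε ^ 2 * b ^ 2 + a ^ 2 := by nlinarith [sq_nonneg (ε * b - a)]
  have hrhs : ε / 2 * (a ^ 2 + b ^ 2) + (1 / (2 * ε) - ε / 2) * a ^ 2
      = (ε ^ 2 * b ^ 2 + a ^ 2) / (2 * ε) := by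
    field_simp
    ring
  rw [hrhs, le_div_iff₀ (by positivity)]
  linarith

section FiniteSupport

variable {G} {f : V → ℂ} {U : Finset V}

omit [DecidableRel G.Adj] in
theorem exists_finset_nbhd_support (hf : (Function.support f).Finite) :
    ∃ U : Finset V, (∀ x, f x ≠ 0 → x ∈ U) ∧ ∀ x y, G.Adj x y → f x ≠ 0 → y ∈ U := by
  refine ⟨hf.toFinset ∪ hf.toFinset.biUnion fun x => G.neighborFinset x, fun x hx => ?_, fun x y hxy hx => ?_⟩
  · exact Finset.mem_union_left _ (hf.mem_toFinset.2 hx)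
  · exact Finset.mem_union_right _
      (Finset.mem_biUnion.2 ⟨x, hf.mem_toFinset.2 hx, (G.mem_neighborFinset x y).2 hxy⟩)

omit [DecidableEq V] in
theorem qPot_eq_sum (w : V → ℝ) (hsupp : ∀ x, f x ≠ 0 → x ∈ U) :
    qPot w f = ∑ x ∈ U, w x * ‖f x‖ ^ 2 :=
  tsum_eq_sum fun x hx => by simp [not_imp_comm.1 (hsupp x) hx]

omit [DecidableEq V] in
theorem qNormSq_eq_sum (hsupp : ∀ x, f x ≠ 0 → x ∈ U) : qNormSq f = ∑ x ∈ U, ‖f x‖ ^ 2 :=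
  tsum_eq_sum fun x hx => by simp [not_imp_comm.1 (hsupp x) hx]

omit [DecidableEq V] [DecidableRel G.Adj] in
theorem qDeg_eq_qPot : qDeg G f = qPot (fun x => (G.degree x : ℝ)) f := rfl

omit [DecidableEq V] in
theorem qDeg_eq_sum_adjPairs (hsupp : ∀ x, f x ≠ 0 → x ∈ U)
    (hnbr : ∀ x y, G.Adj x y → f x ≠ 0 → y ∈ U) :
    qDeg G f = ∑ p ∈ adjPairs G U, ‖f p.1‖ ^ 2 := by
  rw [qDeg_eq_qPot, qPot_eq_sum _ hsupp, sum_adjPairs_eq_sum_sum G U fun x _ => ‖f x‖ ^ 2]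
  refine Finset.sum_congr rfl fun x _ => ?_
  rw [← Finset.sum_filter, Finset.sum_const, nsmul_eq_mul]
  by_cases hx : f x = 0
  · simp [hx]
  · have hN : U.filter (G.Adj x) = G.neighborFinset x := by
      ext y
      simpa using fun hxy => hnbr x y hxy hx
    rw [hN, SimpleGraph.card_neighborFinset_eq_degree]

omit [DecidableEq V] [G.LocallyFinite] in
theorem qLap_eq_sum_adjPairs (hsupp : ∀ x, f x ≠ 0 → x ∈ U)
    (hnbr : ∀ x y, G.Adj x y → f x ≠ 0 → y ∈ U) :
    qLap G f = 1 / 2 * ∑ p ∈ adjPairs G U, ‖f p.1 - f p.2‖ ^ 2 := by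
  have hvanish (x y : V) (hxy : x ∉ U ∨ y ∉ U) :
      (if G.Adj x y then ‖f x - f y‖ ^ 2 else 0) = 0 := by
    split_ifs with hadj
    · have hx : f x = 0 := by
        by_contra hx
        exact hxy.elim (· (hsupp x hx)) (· (hnbr x y hadj hx))
      have hy : f y = 0 := by
        by_contra hy
        exact hxy.elim (· (hnbr y x hadj.symm hy)) (· (hsupp y hy))
      simp [hx, hy]
    · rfl
  rw [qLap, tsum_tsum_eq_sum_sum hvanish, sum_adjPairs_eq_sum_sum G U fun x y => ‖f x - f y‖ ^ 2]

omit [DecidableEq V] in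
theorem qDeg_sub_qLap_eq (hsupp : ∀ x, f x ≠ 0 → x ∈ U)
    (hnbr : ∀ x y, G.Adj x y → f x ≠ 0 → y ∈ U) :
    qDeg G f - qLap G f = ∑ p ∈ adjPairs G U, (f p.1 * (starRingEnd ℂ) (f p.2)).re := by
  have hexpand (a b : ℂ) : ‖a - b‖ ^ 2 = ‖a‖ ^ 2 + ‖b‖ ^ 2 - 2 * (a * (starRingEnd ℂ) b).re := by
    simpa only [Complex.normSq_eq_norm_sq] using Complex.normSq_sub a b
  rw [qLap_eq_sum_adjPairs hsupp hnbr, Finset.sum_congr rfl fun p _ => hexpand (f p.1) (f p.2),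
    qDeg_eq_sum_adjPairs hsupp hnbr, Finset.sum_sub_distrib,
    Finset.sum_add_distrib, sum_adjPairs_swap G U fun _ y => ‖f y‖ ^ 2, ← Finset.mul_sum]
  ring

end FiniteSupport

theorem abs_qLap_sub_qDeg_le {k : ℝ} (hsparse : ∀ W : Finset V, (edgesTwice G W : ℝ) ≤ k * W.card)
    {f : V → ℂ} (hf : (Function.support f).Finite) {ε : ℝ} (hε0 : 0 < ε) (hε1 : ε ≤ 1) :
    |qLap G f - qDeg G f| ≤ ε * qDeg G f + (1 / (2 * ε) - ε / 2) * (k * qNormSq f) := by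
  obtain ⟨U, hsupp, hnbr⟩ := exists_finset_nbhd_support (G := G) hf
  have hc : 0 ≤ 1 / (2 * ε) - ε / 2 := by
    rw [sub_nonneg, div_le_div_iff₀ two_pos (by positivity)]
    nlinarith
  have hmin := sum_adjPairs_min_le G hsparse U (g := fun x => ‖f x‖ ^ 2) fun x _ => by positivity
  have hsnd := sum_adjPairs_swap G U fun _ y => ‖f y‖ ^ 2
  rw [abs_sub_comm, qDeg_sub_qLap_eq hsupp hnbr, qDeg_eq_sum_adjPairs hsupp hnbr,
    qNormSq_eq_sum hsupp]
  calc |∑ p ∈ adjPairs G U, (f p.1 * (starRingEnd ℂ) (f p.2)).re|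
      ≤ ∑ p ∈ adjPairs G U, ‖f p.1‖ * ‖f p.2‖ := by
        refine (Finset.abs_sum_le_sum_abs _ _).trans (Finset.sum_le_sum fun p _ => ?_)
        simpa using Complex.abs_re_le_norm (f p.1 * (starRingEnd ℂ) (f p.2))
    _ ≤ ∑ p ∈ adjPairs G U, (ε / 2 * (‖f p.1‖ ^ 2 + ‖f p.2‖ ^ 2)
          + (1 / (2 * ε) - ε / 2) * min (‖f p.1‖ ^ 2) (‖f p.2‖ ^ 2)) :=
        Finset.sum_le_sum fun p _ => mul_le_eps_mul_add_min (norm_nonneg _) (norm_nonneg _) hε0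
    _ = ε * ∑ p ∈ adjPairs G U, ‖f p.1‖ ^ 2
          + (1 / (2 * ε) - ε / 2) * ∑ p ∈ adjPairs G U, min (‖f p.1‖ ^ 2) (‖f p.2‖ ^ 2) := by
        rw [Finset.sum_add_distrib, ← Finset.mul_sum, ← Finset.mul_sum, Finset.sum_add_distrib,
          ← hsnd]
        ring
    _ ≤ _ := by gcongr

section Potential

omit [DecidableEq V]

variable {f : V → ℂ}

theorem qPot_nonneg {w : V → ℝ} (hw : ∀ x, 0 ≤ w x) : 0 ≤ qPot w f :=
  tsum_nonneg fun x => mul_nonneg (hw x) (sq_nonneg _)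

theorem qPot_add (hf : (Function.support f).Finite) (w w' : V → ℝ) :
    qPot (fun x => w x + w' x) f = qPot w f + qPot w' f := by
  have hsupp (x : V) (hx : f x ≠ 0) : x ∈ hf.toFinset := hf.mem_toFinset.2 hx
  simp only [qPot_eq_sum _ hsupp, add_mul, Finset.sum_add_distrib]

theorem mul_qNormSq_le_qPot (hf : (Function.support f).Finite) {w : V → ℝ} {c : ℝ}
    (hw : ∀ x, c ≤ w x) : c * qNormSq f ≤ qPot w f := by
  have hsupp (x : V) (hx : f x ≠ 0) : x ∈ hf.toFinset := hf.mem_toFinset.2 hx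
  rw [qNormSq_eq_sum hsupp, qPot_eq_sum _ hsupp, Finset.mul_sum]
  exact Finset.sum_le_sum fun x _ => mul_le_mul_of_nonneg_right (hw x) (sq_nonneg _)

theorem qPot_le_mul_qNormSq (hf : (Function.support f).Finite) {w : V → ℝ} {c : ℝ}
    (hw : ∀ x, w x ≤ c) : qPot w f ≤ c * qNormSq f := by
  have hsupp (x : V) (hx : f x ≠ 0) : x ∈ hf.toFinset := hf.mem_toFinset.2 hx
  rw [qNormSq_eq_sum hsupp, qPot_eq_sum _ hsupp, Finset.mul_sum]
  exact Finset.sum_le_sum fun x _ => mul_le_mul_of_nonneg_right (hw x) (sq_nonneg _)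

end Potential

theorem nonpos_of_forall_le_mul {a b : ℝ} (h : ∀ ε, 0 < ε → ε ≤ 1 → a ≤ ε * b) : a ≤ 0 := by
  by_contra! ha
  have hab : a ≤ b := by simpa using h 1 one_pos le_rfl
  have hb : 0 < b := ha.trans_le hab
  have := h (a / (2 * b)) (by positivity) (by rw [div_le_one (by positivity)]; linarith)
  rw [div_mul_eq_mul_div, mul_div_mul_right _ _ hb.ne'] at this
  linarith

theorem exists_eps_mul_add_div_eq_two_sqrt {k d : ℝ} (hk : 0 < k) (hkd : k ≤ d) :
    ∃ ε, 0 < ε ∧ ε ≤ 1 ∧ ε * (d - k / 2) + k / (2 * ε) = 2 * √(k / 2 * (d - k / 2)) := by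
  obtain ⟨s, hs, rfl⟩ : ∃ s, 0 < s ∧ k = 2 * s ^ 2 :=
    ⟨√(k / 2), Real.sqrt_pos.2 (by linarith), by rw [Real.sq_sqrt (by linarith)]; ring⟩
  obtain ⟨t, ht, hdt⟩ : ∃ t, 0 < t ∧ d - 2 * s ^ 2 / 2 = t ^ 2 :=
    ⟨√(d - 2 * s ^ 2 / 2), Real.sqrt_pos.2 (by nlinarith), (Real.sq_sqrt (by nlinarith)).symm⟩
  refine ⟨s / t, div_pos hs ht, (div_le_one ht).2 (by nlinarith), ?_⟩
  rw [hdt, show 2 * s ^ 2 / 2 * t ^ 2 = (s * t) ^ 2 by ring, Real.sqrt_sq (by positivity)]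
  field_simp
  ring

theorem sub_two_sqrt_mul_le_of_forall_abs_sub_le {L Dg P N k d : ℝ} (hk : 0 ≤ k) (hkd : k ≤ d)
    (hP : 0 ≤ P) (hd : d * N ≤ Dg + P)
    (h : ∀ ε, 0 < ε → ε ≤ 1 → |L - Dg| ≤ ε * Dg + (1 / (2 * ε) - ε / 2) * (k * N)) :
    (d - 2 * √(k / 2 * (d - k / 2))) * N ≤ L + P := by
  rcases hk.eq_or_lt with rfl | hk
  · have hLDg : Dg - L ≤ 0 := nonpos_of_forall_le_mul (b := Dg) fun ε h0 h1 => by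
      linarith [h ε h0 h1, neg_abs_le (L - Dg)]
    simp only [zero_div, zero_mul, Real.sqrt_zero, mul_zero, sub_zero]
    linarith
  obtain ⟨ε, hε0, hε1, hε⟩ := exists_eps_mul_add_div_eq_two_sqrt hk hkd
  have hL := neg_le_of_abs_le (h ε hε0 hε1)
  have hdε := mul_le_mul_of_nonneg_left hd (sub_nonneg.2 hε1)
  have hPε := mul_nonneg hε0.le hP
  rw [← hε]
  linear_combination hL + hdε + hPε

theorem le_add_two_sqrt_mul_of_forall_abs_sub_le {L Dg P N k D : ℝ} (hk : 0 ≤ k) (hkD : k ≤ D)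
    (hP : 0 ≤ P) (hD : Dg + P ≤ D * N)
    (h : ∀ ε, 0 < ε → ε ≤ 1 → |L - Dg| ≤ ε * Dg + (1 / (2 * ε) - ε / 2) * (k * N)) :
    L + P ≤ (D + 2 * √(k / 2 * (D - k / 2))) * N := by
  rcases hk.eq_or_lt with rfl | hk
  · have hLDg : L - Dg ≤ 0 := nonpos_of_forall_le_mul (b := Dg) fun ε h0 h1 => by
      linarith [h ε h0 h1, le_abs_self (L - Dg)]
    simp only [zero_div, zero_mul, Real.sqrt_zero, mul_zero, add_zero]
    linarith
  obtain ⟨ε, hε0, hε1, hε⟩ := exists_eps_mul_add_div_eq_two_sqrt hk hkD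
  have hL := le_of_abs_le (h ε hε0 hε1)
  have hDε := mul_le_mul_of_nonneg_left hD (add_nonneg zero_le_one hε0.le)
  have hPε := mul_nonneg hε0.le hP
  rw [← hε]
  linear_combination hL + hDε + hPε

theorem stmt1 [Nonempty V] (q : V → ℝ) (hq : ∀ x, 0 ≤ q x) (k : ℝ)
    (hsparse : ∀ W : Finset V, (edgesTwice G W : ℝ) ≤ k * W.card)
    (hbdd : BddAbove (Set.range fun x => (G.degree x : ℝ) + q x))
    (hkd : k ≤ ⨅ x, ((G.degree x : ℝ) + q x))
    (f : V → ℂ) (hf : (Function.support f).Finite) :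
    ((⨅ x, ((G.degree x : ℝ) + q x)) -
        2 * Real.sqrt (k / 2 * ((⨅ x, ((G.degree x : ℝ) + q x)) - k / 2))) * qNormSq f
      ≤ qLap G f + qPot q f ∧
    qLap G f + qPot q f ≤
      ((⨆ x, ((G.degree x : ℝ) + q x)) +
        2 * Real.sqrt (k / 2 * ((⨆ x, ((G.degree x : ℝ) + q x)) - k / 2))) * qNormSq f := by
  have hk := nonneg_of_forall_edgesTwice_le G hsparse
  have hbelow : BddBelow (Set.range fun x => (G.degree x : ℝ) + q x) :=
    ⟨0, by rintro _ ⟨x, rfl⟩; exact add_nonneg (Nat.cast_nonneg _) (hq x)⟩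
  have hweight : qDeg G f + qPot q f = qPot (fun x => (G.degree x : ℝ) + q x) f := by
    rw [qDeg_eq_qPot, qPot_add hf]
  have hcross (ε : ℝ) (h0 : 0 < ε) (h1 : ε ≤ 1) := abs_qLap_sub_qDeg_le G hsparse hf h0 h1
  refine ⟨sub_two_sqrt_mul_le_of_forall_abs_sub_le hk hkd (qPot_nonneg hq) ?_ hcross,
    le_add_two_sqrt_mul_of_forall_abs_sub_le hk (hkd.trans (ciInf_le_ciSup hbelow hbdd))
      (qPot_nonneg hq) ?_ hcross⟩
  · rw [hweight]
    exact mul_qNormSq_le_qPot hf fun x => ciInf_le hbelow x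
  · rw [hweight]
    exact qPot_le_mul_qNormSq hf fun x => le_ciSup hbdd x

end
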